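/- Under the recursion x_{w₁,·} = Γ(w₁+β₁/α₁)/Γ(β₁/α₁)·Γ(1+(β₁+1)/α₁)/Γ(w₁+1+(β₁+1)/α₁)·(1-r+β₁)/(β₁(β₁+1)), one has ∑_{w₁=2}^∞ Γ(w₁+β₁/α₁)/Γ(w₁+1+(β₁+1)/α₁) = α₁ · Γ(2+β₁/α₁)/Γ(2+(β₁+1)/α₁). -/

import Mathlib

/-!
Since `Γ(x + 1) = x Γ(x)`, the ratio `f(x) = Γ(x + a) / Γ(x + b)` satisfies
`f(x) - f(x + 1) = (b - a) Γ(x + a) / Γ(x + 1 + b)`, so the series telescopes. Its sum is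
`f(0) / (b - a)` because `f(n) → 0` when `a < b`, which follows from Wendel's inequality
`Γ(x + c) ≤ x ^ c Γ(x)` (`0 < c < 1`), a consequence of the log-convexity of `Γ`.
Here `a = 2 + β₁ / α₁` and `b = 2 + (β₁ + 1) / α₁`, so that `b - a = 1 / α₁`.
-/

open Real Filter Topology Finset

namespace Real

theorem Gamma_add_le_rpow_mul_Gamma {x c : ℝ} (hx : 0 < x) (hc₀ : 0 < c) (hc₁ : c < 1) :
    Gamma (x + c) ≤ x ^ c * Gamma x := by
  have hconv := Gamma_mul_add_mul_le_rpow_Gamma_mul_rpow_Gamma (s := x) (t := x + 1)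
    hx (by linarith) (sub_pos.2 hc₁) hc₀ (sub_add_cancel 1 c)
  calc Gamma (x + c) = Gamma ((1 - c) * x + c * (x + 1)) := by ring_nf
    _ ≤ Gamma x ^ (1 - c) * Gamma (x + 1) ^ c := hconv
    _ = x ^ c * Gamma x := by
      rw [Gamma_add_one hx.ne', mul_rpow hx.le (Gamma_pos_of_pos hx).le, ← mul_assoc,
        mul_comm _ (x ^ c), mul_assoc, ← rpow_add (Gamma_pos_of_pos hx), sub_add_cancel,
        rpow_one]

theorem Gamma_add_one_sub_le {x c : ℝ} (hx : 0 < x) (hc₀ : 0 < c) (hc₁ : c < 1) :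
    Gamma (x + 1 - c) ≤ x ^ (-c) * Gamma (x + 1) := by
  calc Gamma (x + 1 - c) = Gamma (x + (1 - c)) := by ring_nf
    _ ≤ x ^ (1 - c) * Gamma x := Gamma_add_le_rpow_mul_Gamma hx (by linarith) (by linarith)
    _ = x ^ (-c) * Gamma (x + 1) := by
      rw [Gamma_add_one hx.ne', sub_eq_add_neg, rpow_add hx, rpow_one]; ring

theorem tendsto_Gamma_add_div_Gamma_add {a b : ℝ} (ha : 0 < a) (hab : a < b) :
    Tendsto (fun n : ℕ => Gamma (n + a) / Gamma (n + b)) atTop (𝓝 0) := by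
  set c : ℝ := min (b - a) (1 / 2)
  have hb : 0 < b := ha.trans hab
  have hc₀ : 0 < c := lt_min (by linarith) one_half_pos
  have hc₁ : c < 1 := (min_le_right _ _).trans_lt one_half_lt_one
  have hcb : a + c ≤ b := by linarith [min_le_left (b - a) (1 / 2)]
  have hbound : Tendsto (fun n : ℕ => ((n : ℝ) + (a + c - 1)) ^ (-c)) atTop (𝓝 0) :=
    (tendsto_rpow_neg_atTop hc₀).comp
      (tendsto_atTop_add_const_right _ _ tendsto_natCast_atTop_atTop)
  refine squeeze_zero' (Eventually.of_forall fun n => ?_) ?_ hbound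
  · exact div_nonneg (Gamma_pos_of_pos (by positivity)).le (Gamma_pos_of_pos (by positivity)).le
  filter_upwards [eventually_ge_atTop 2] with n hn
  have hn : (2 : ℝ) ≤ n := by exact_mod_cast hn
  have hx : 0 < (n : ℝ) + (a + c - 1) := by linarith
  have hGb : 0 < Gamma (n + b) := Gamma_pos_of_pos (by linarith)
  have hmono : Gamma (n + (a + c - 1) + 1) ≤ Gamma (n + b) :=
    Gamma_strictMonoOn_Ici.monotoneOn (by simp only [Set.mem_Ici]; linarith)
      (by simp only [Set.mem_Ici]; linarith) (by linarith)
  rw [div_le_iff₀ hGb]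
  calc Gamma (n + a) = Gamma ((n + (a + c - 1)) + 1 - c) := by congr 1; ring
    _ ≤ (n + (a + c - 1)) ^ (-c) * Gamma ((n + (a + c - 1)) + 1) :=
      Gamma_add_one_sub_le hx hc₀ hc₁
    _ ≤ (n + (a + c - 1)) ^ (-c) * Gamma (n + b) := by gcongr

theorem Gamma_div_Gamma_sub_Gamma_add_one_div_Gamma_add_one {x y : ℝ} (hx : 0 < x)
    (hy : 0 < y) :
    Gamma x / Gamma y - Gamma (x + 1) / Gamma (y + 1) = (y - x) * (Gamma x / Gamma (y + 1)) := by
  have hGy := (Gamma_pos_of_pos hy).ne'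
  rw [Gamma_add_one hx.ne', Gamma_add_one hy.ne']
  field_simp

end Real

theorem hasSum_sub_succ_of_antitone {f : ℕ → ℝ} {l : ℝ} (hf : Antitone f)
    (hl : Tendsto f atTop (𝓝 l)) : HasSum (fun n => f n - f (n + 1)) (f 0 - l) := by
  rw [hasSum_iff_tendsto_nat_of_nonneg fun n => sub_nonneg.2 (hf n.le_succ)]
  simp only [sum_range_sub']
  exact tendsto_const_nhds.sub hl

theorem hasSum_Gamma_add_div_Gamma_add_one_add {a b : ℝ} (ha : 0 < a) (hab : a < b) :
    HasSum (fun n : ℕ => Gamma (n + a) / Gamma (n + 1 + b))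
      ((b - a)⁻¹ * (Gamma a / Gamma b)) := by
  set f : ℕ → ℝ := fun n => Gamma (n + a) / Gamma (n + b)
  have hterm_nonneg (n : ℕ) : 0 ≤ Gamma (n + a) / Gamma (n + 1 + b) :=
    div_nonneg (Gamma_pos_of_pos (by positivity)).le
      (Gamma_pos_of_pos (by linarith [n.cast_nonneg (α := ℝ)])).le
  have hdiff (n : ℕ) : f n - f (n + 1) = (b - a) * (Gamma (n + a) / Gamma (n + 1 + b)) := by
    have h := Gamma_div_Gamma_sub_Gamma_add_one_div_Gamma_add_one
      (x := n + a) (y := n + b) (by positivity) (by linarith [n.cast_nonneg (α := ℝ)])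
    simp only [f, Nat.cast_succ]
    rw [add_right_comm _ 1 a, add_right_comm _ 1 b, h]
    ring
  have hf : Antitone f := antitone_nat_of_succ_le fun n =>
    sub_nonneg.1 <| (hdiff n).symm ▸ mul_nonneg (sub_pos.2 hab).le (hterm_nonneg n)
  have hsum := (hasSum_sub_succ_of_antitone hf (tendsto_Gamma_add_div_Gamma_add ha hab)).mul_left
    (b - a)⁻¹
  simp only [hdiff, inv_mul_cancel_left₀ (sub_pos.2 hab).ne', sub_zero, f, Nat.cast_zero,
    zero_add] at hsum
  exact hsum

theorem gamma_tail_sum (α₁ β₁ : ℝ) (hα₁ : 0 < α₁) (hβ₁ : 0 < β₁) :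
    HasSum
      (fun k : ℕ =>
        Real.Gamma (((k + 2 : ℕ) : ℝ) + β₁ / α₁) /
          Real.Gamma (((k + 2 : ℕ) : ℝ) + 1 + (β₁ + 1) / α₁))
      (α₁ * (Real.Gamma (2 + β₁ / α₁) / Real.Gamma (2 + (β₁ + 1) / α₁))) := by
  have hgap : (2 + (β₁ + 1) / α₁) - (2 + β₁ / α₁) = α₁⁻¹ := by field_simp; ring
  have h := hasSum_Gamma_add_div_Gamma_add_one_add
    (a := 2 + β₁ / α₁) (b := 2 + (β₁ + 1) / α₁)
    (by positivity) (by linarith [inv_pos.2 hα₁])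
  rw [hgap, inv_inv] at h
  convert h using 3 with k <;> push_cast <;> ring_nf
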